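/- arXiv:2409.04030 — 2 statements merged into one kernel-verified Lean document; each statement's English description precedes it below -/
import Mathlib

section
/- With notation as above, the inverse limits satisfy: lim_n ker(1−γ : M_n → M_n) = 0 and lim_n coker(1−γ : M_n → M_n) ≅ ℂ, where the limits are taken along the transition maps induced by the quotients M_n → M_{n−1}. -/
noncomputable section

open Polynomial

/-- The element `1 - γ` of `ℂ[γ]`. -/
abbrev omegaP : Polynomial ℂ := 1 - Polynomial.X

/-- `M_n = ℂ[γ]/((1 - γ)^n)`. -/
abbrev Mquot (n : ℕ) : Type := Polynomial ℂ ⧸ Ideal.span {omegaP ^ n}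

/-- Multiplication by `1 - γ` on `M_n`, as a `ℂ`-linear map. -/
abbrev Tmap (n : ℕ) : Mquot n →ₗ[ℂ] Mquot n :=
  LinearMap.mulLeft ℂ (Ideal.Quotient.mk (Ideal.span {omegaP ^ n}) omegaP)

/-- The natural quotient map `M_{n+1} → M_n` (reduction modulo `(1-γ)^n`). -/
def piHom (n : ℕ) : Mquot (n + 1) →ₐ[ℂ] Mquot n :=
  Ideal.Quotient.liftₐ (Ideal.span {omegaP ^ (n + 1)})
    (Ideal.Quotient.mkₐ ℂ (Ideal.span {omegaP ^ n}))
    (fun a ha => by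
      have h : a ∈ Ideal.span {omegaP ^ n} :=
        Ideal.span_singleton_le_span_singleton.mpr (pow_dvd_pow _ (Nat.le_succ n)) ha
      simpa [Ideal.Quotient.mkₐ_eq_mk, Ideal.Quotient.eq_zero_iff_mem] using h)

/-- `coker(1-γ : M_n → M_n)`. -/
abbrev CokM (n : ℕ) : Type := Mquot n ⧸ LinearMap.range (Tmap n)

/-- The transition map `coker(1-γ : M_{n+1}) → coker(1-γ : M_n)` induced by the reduction
map `M_{n+1} → M_n`. -/
def cokMap (n : ℕ) : CokM (n + 1) →ₗ[ℂ] CokM n :=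
  Submodule.mapQ (LinearMap.range (Tmap (n + 1))) (LinearMap.range (Tmap n))
    (piHom n).toLinearMap
    (by
      rintro _ ⟨y, rfl⟩
      refine ⟨piHom n y, ?_⟩
      have h1 : piHom n (Ideal.Quotient.mk (Ideal.span {omegaP ^ (n + 1)}) omegaP) =
          Ideal.Quotient.mk (Ideal.span {omegaP ^ n}) omegaP := by
        first
          | rfl
          | exact Ideal.Quotient.lift_mk _ _ _
          | (simp [piHom, Ideal.Quotient.liftₐ_apply, Ideal.Quotient.lift_mk,
              Ideal.Quotient.mkₐ_eq_mk]; rfl)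
      show (Ideal.Quotient.mk (Ideal.span {omegaP ^ n}) omegaP) * piHom n y =
        piHom n ((Ideal.Quotient.mk (Ideal.span {omegaP ^ (n + 1)}) omegaP) * y)
      rw [map_mul, h1])

/-- The inverse limit `lim_n coker(1-γ : M_n)`, as the submodule of compatible sequences. -/
def CokLim : Submodule ℂ (∀ n, CokM n) where
  carrier := {x | ∀ n, cokMap n (x (n + 1)) = x n}
  add_mem' := by
    intro a b ha hb n
    simp [Pi.add_apply, map_add, ha n, hb n]
  zero_mem' := by intro n; simp
  smul_mem' := by
    intro c a ha n
    simp [Pi.smul_apply, map_smul, ha n]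

/-! With `ω = 1 - γ`, the module `M_n` has `ℂ`-basis `1, ω, …, ω^(n-1)`. The kernel of `ω` on
`M_{n+1}` is spanned by `ω^n`, which dies in `M_n`, so compatible sequences of kernel elements
vanish. The cokernel of `ω` on `M_{n+1}` is `ℂ[γ]/(ω) ≅ ℂ`, via evaluation at `γ = 1`; these
identifications commute with the transition maps, which are therefore isomorphisms, and the
cokernel of `M_0 = 0` is zero, so the inverse limit is `ℂ`. -/

theorem Ideal.Quotient.mk_span_pow_eq_zero_of_mul {R : Type*} [CommRing R] [IsDomain R] {a : R}
    (ha : a ≠ 0) {n : ℕ} {p : R} (h : Ideal.Quotient.mk (Ideal.span {a ^ (n + 1)}) (a * p) = 0) :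
    Ideal.Quotient.mk (Ideal.span {a ^ n}) p = 0 := by
  rw [Ideal.Quotient.eq_zero_iff_mem, Ideal.mem_span_singleton] at h ⊢
  rwa [pow_succ', mul_dvd_mul_iff_left ha] at h

lemma omegaP_ne_zero : omegaP ≠ 0 :=
  sub_ne_zero.mpr (Polynomial.X_ne_C 1).symm

lemma piHom_mk (n : ℕ) (p : ℂ[X]) :
    piHom n (Ideal.Quotient.mk _ p) = Ideal.Quotient.mk (Ideal.span {omegaP ^ n}) p :=
  Ideal.Quotient.lift_mk _ _ _

lemma piHom_eq_zero_of_mem_ker {n : ℕ} {y : Mquot (n + 1)}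
    (hy : y ∈ LinearMap.ker (Tmap (n + 1))) : piHom n y = 0 := by
  obtain ⟨p, rfl⟩ := Ideal.Quotient.mk_surjective y
  rw [piHom_mk]
  exact Ideal.Quotient.mk_span_pow_eq_zero_of_mul omegaP_ne_zero hy

lemma cokMap_mk (n : ℕ) (p : ℂ[X]) :
    cokMap n (Submodule.Quotient.mk (Ideal.Quotient.mk _ p)) =
      Submodule.Quotient.mk (Ideal.Quotient.mk (Ideal.span {omegaP ^ n}) p) := by
  rw [cokMap, Submodule.mapQ_apply, AlgHom.toLinearMap_apply, piHom_mk]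

instance : Subsingleton (CokM 0) := by
  have : Subsingleton (Mquot 0) := Ideal.Quotient.subsingleton_iff.mpr (by simp)
  infer_instance

def evalOne (n : ℕ) : Mquot (n + 1) →ₐ[ℂ] ℂ :=
  Ideal.Quotient.liftₐ _ (Polynomial.aeval 1) fun a ha => by
    obtain ⟨b, rfl⟩ := Ideal.mem_span_singleton'.mp ha
    simp

lemma evalOne_mk (n : ℕ) (p : ℂ[X]) : evalOne n (Ideal.Quotient.mk _ p) = p.eval 1 := by
  simp [evalOne, Ideal.Quotient.liftₐ_apply]

def cokEval (n : ℕ) : CokM (n + 1) →ₗ[ℂ] ℂ :=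
  (LinearMap.range (Tmap (n + 1))).liftQ (evalOne n).toLinearMap <| by
    rintro _ ⟨y, rfl⟩
    obtain ⟨p, rfl⟩ := Ideal.Quotient.mk_surjective y
    change evalOne n (Ideal.Quotient.mk _ (omegaP * p)) = 0
    simp [evalOne_mk]

lemma cokEval_mk (n : ℕ) (p : ℂ[X]) :
    cokEval n (Submodule.Quotient.mk (Ideal.Quotient.mk _ p)) = p.eval 1 :=
  evalOne_mk n p

lemma cokEval_injective (n : ℕ) : Function.Injective (cokEval n) := by
  refine (injective_iff_map_eq_zero _).mpr fun y hy => ?_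
  obtain ⟨z, rfl⟩ := Submodule.Quotient.mk_surjective _ y
  obtain ⟨p, rfl⟩ := Ideal.Quotient.mk_surjective z
  rw [cokEval_mk] at hy
  obtain ⟨q, rfl⟩ : omegaP ∣ p := by
    rw [omegaP, ← neg_sub, neg_dvd, ← Polynomial.C_1]
    exact Polynomial.dvd_iff_isRoot.mpr hy
  rw [Submodule.Quotient.mk_eq_zero, map_mul]
  exact ⟨_, rfl⟩

lemma cokEval_cokMap (n : ℕ) (y : CokM (n + 2)) :
    cokEval n (cokMap (n + 1) y) = cokEval (n + 1) y := by
  obtain ⟨z, rfl⟩ := Submodule.Quotient.mk_surjective _ y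
  obtain ⟨p, rfl⟩ := Ideal.Quotient.mk_surjective z
  rw [cokMap_mk, cokEval_mk, cokEval_mk]

lemma cokEval_eq_of_mem_cokLim {x : ∀ n, CokM n} (hx : x ∈ CokLim) (n : ℕ) :
    cokEval n (x (n + 1)) = cokEval 0 (x 1) := by
  induction n with
  | zero => rfl
  | succ n ih => rw [← ih, ← hx (n + 1), cokEval_cokMap]

def cokLimEval : CokLim →ₗ[ℂ] ℂ :=
  cokEval 0 ∘ₗ LinearMap.proj 1 ∘ₗ CokLim.subtype

lemma cokLimEval_injective : Function.Injective cokLimEval := by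
  intro x y hxy
  refine Subtype.ext <| funext fun n => ?_
  cases n with
  | zero => exact Subsingleton.elim _ _
  | succ n =>
    refine cokEval_injective n ?_
    rw [cokEval_eq_of_mem_cokLim x.2, cokEval_eq_of_mem_cokLim y.2]
    exact hxy

lemma cokLimEval_surjective : Function.Surjective cokLimEval := fun c =>
  ⟨⟨fun _ => Submodule.Quotient.mk (Ideal.Quotient.mk _ (Polynomial.C c)),
    fun n => cokMap_mk n _⟩, (cokEval_mk 0 _).trans Polynomial.eval_C⟩

/-- For `M_n = ℂ[γ]/((1-γ)^n)` with transition maps the reduction maps `M_{n+1} → M_n`: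
the inverse limit of the kernels of `1-γ` vanishes (every compatible sequence of kernel
elements is zero), and the inverse limit of the cokernels of `1-γ` is isomorphic to `ℂ`. -/
theorem stmt6 :
    (∀ x : ∀ n, Mquot n,
      (∀ n, x n ∈ LinearMap.ker (Tmap n)) →
      (∀ n, piHom n (x (n + 1)) = x n) →
      ∀ n, x n = 0) ∧
    Nonempty (CokLim ≃ₗ[ℂ] ℂ) :=
  ⟨fun x hker hcompat n => hcompat n ▸ piHom_eq_zero_of_mem_ker (hker (n + 1)),
    ⟨LinearEquiv.ofBijective cokLimEval ⟨cokLimEval_injective, cokLimEval_surjective⟩⟩⟩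

end
end

section
/- Let G be a connected reductive complex group with automorphism θ of finite order m inducing the grading g = ⊕_{k∈ℤ/m} g_k, and let P ⊆ G be a θ-stable parabolic subgroup with Lie algebra p. If s ∈ p ∩ g_1 is a semisimple element, then there exists a θ-stable Levi factor L of P with s ∈ Lie(L)_1 = Lie(L) ∩ g_1. -/
/-!
Write `S = ad s`. As `S` is semisimple, `S = S A(S) S` for some polynomial `A`, and
`e' = e - A(S) (S e)` is the component of `e` in `ker S` along `range S`. Since `s ∈ p`, the
vector `S e = ⁅s, e⁆` lies in the nilradical `n = ⊕_{j > 0} g(e; j)`, which is `S`-stable, so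
`e - e' ∈ n`. Consequently `ad e' - k` maps `⊕_{j ≥ k} g(e; j)` into `⊕_{j ≥ k + 1} g(e; j)`, so
a product of distinct factors `ad e' - k` vanishes on the whole filtration: `ad e'` is
diagonalisable with integer eigenvalues and its nonnegative part is again `p`. Finally `θ`
rescales `S` by `ζ ≠ 0`, hence preserves `ker S` and `range S`; as `θ e = e`, it fixes `e'`.
-/

open Polynomial

theorem Squarefree.exists_dvd_X_mul_isCoprime_X {K : Type*} [Field K] {p : K[X]}
    (hp : Squarefree p) :
    ∃ q : K[X], p ∣ X * q ∧ IsCoprime X q := by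
  by_cases hX : X ∣ p
  · obtain ⟨q, rfl⟩ := hX
    refine ⟨q, dvd_rfl, prime_X.coprime_iff_not_dvd.mpr fun ⟨t, ht⟩ => not_isUnit_X (hp X ?_)⟩
    exact ⟨t, by rw [ht, mul_assoc]⟩
  · exact ⟨p, dvd_mul_left p X, prime_X.coprime_iff_not_dvd.mpr hX⟩

namespace Module.End

variable {K V : Type*} [Field K] [AddCommGroup V] [Module K V]

theorem mul_aeval_comm (f : End K V) (A : K[X]) : f * aeval f A = aeval f A * f := by
  simpa using ((commute_X A).map (aeval f)).eq

theorem ker_aeval_X_sub_C (f : End K V) (μ : K) :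
    LinearMap.ker (aeval f (X - C μ)) = f.eigenspace μ := by
  rw [eigenspace_def, map_sub, aeval_X, aeval_C, Algebra.algebraMap_eq_smul_one]

theorem ker_aeval_prod_X_sub_C {ι : Type*} (f : End K V) (s : Finset ι) {μ : ι → K}
    (hμ : Set.InjOn μ s) :
    LinearMap.ker (aeval f (∏ i ∈ s, (X - C (μ i)))) = ⨆ i ∈ s, f.eigenspace (μ i) := by
  classical
  induction s using Finset.induction_on with
  | empty =>
    simp only [Finset.prod_empty, map_one, Finset.notMem_empty, iSup_false, iSup_bot]
    exact LinearMap.ker_id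
  | insert a s ha ih =>
    have hcop : IsCoprime (X - C (μ a)) (∏ i ∈ s, (X - C (μ i))) := by
      refine IsCoprime.prod_right fun i hi => isCoprime_X_sub_C_of_isUnit_sub ?_
      refine (sub_ne_zero.mpr fun h => ha ?_).isUnit
      rwa [hμ (Finset.mem_insert_self a s) (Finset.mem_insert_of_mem hi) h]
    rw [Finset.prod_insert ha, ← sup_ker_aeval_eq_ker_aeval_mul_of_coprime f hcop,
      ker_aeval_X_sub_C, ih (hμ.mono (by simp)), Finset.iSup_insert]

theorem IsSemisimple.exists_mul_aeval_mul_eq_self [FiniteDimensional K V] {f : End K V}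
    (hf : f.IsSemisimple) : ∃ A : K[X], f * aeval f A * f = f := by
  obtain ⟨q, hdvd, A, B, hAB⟩ := hf.minpoly_squarefree.exists_dvd_X_mul_isCoprime_X
  refine ⟨A, ?_⟩
  have hzero : aeval f (X * q * B) = 0 :=
    aeval_eq_zero_of_dvd_aeval_eq_zero (dvd_mul_of_dvd_left hdvd B) (minpoly.aeval K f)
  have hpoly : X * q * B = X - X * A * X := by linear_combination X * hAB
  rw [hpoly, map_sub, map_mul, map_mul, aeval_X, sub_eq_zero] at hzero
  exact hzero.symm

theorem IsSemisimple.disjoint_ker_range [FiniteDimensional K V] {f : End K V}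
    (hf : f.IsSemisimple) : Disjoint (LinearMap.ker f) (LinearMap.range f) := by
  obtain ⟨A, hA⟩ := hf.exists_mul_aeval_mul_eq_self
  rw [Submodule.disjoint_def]
  rintro _ hv ⟨w, rfl⟩
  rw [← hA, f.mul_aeval_comm, mul_apply, mul_apply, LinearMap.mem_ker.mp hv, map_zero]

theorem IsSemisimple.exists_mem_range_apply_sub_eq_zero [FiniteDimensional K V] {f : End K V}
    (hf : f.IsSemisimple) {N : Submodule K V} (hN : N ≤ N.comap f) {v : V} (hv : f v ∈ N) :
    ∃ d ∈ N, d ∈ LinearMap.range f ∧ f (v - d) = 0 := by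
  obtain ⟨A, hA⟩ := hf.exists_mul_aeval_mul_eq_self
  refine ⟨aeval f A (f v), aeval_apply_smul_mem_of_le_comap hv A f hN,
    ⟨aeval f A v, by rw [← mul_apply, f.mul_aeval_comm, mul_apply]⟩, ?_⟩
  rw [map_sub, sub_eq_zero]
  exact (congrArg (· v) hA).symm

def IsScalarOnGraded (f : End K V) (W : ℤ → Submodule K V) : Prop :=
  ∀ k : ℤ, ∀ v ∈ W k, f v - (k : K) • v ∈ W (k + 1)

section IsScalarOnGraded

variable {f : End K V} {W : ℤ → Submodule K V}

theorem aeval_prod_Ico_apply_mem (hfW : f.IsScalarOnGraded W)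
    {i j : ℤ} (hij : i ≤ j) {v : V} (hv : v ∈ W i) :
    aeval f (∏ k ∈ Finset.Ico i j, (X - C (k : K))) v ∈ W j := by
  induction j, hij using Int.leInduction with
  | base => simpa using hv
  | succ j hij ih =>
    rw [← Finset.insert_Ico_right_eq_Ico_add_one hij, Finset.prod_insert (by simp), map_mul,
      mul_apply, map_sub, aeval_X, aeval_C, LinearMap.sub_apply, algebraMap_end_apply]
    exact hfW j _ ih

theorem eigenspace_le_of_notMem_Ico (hfW : f.IsScalarOnGraded W)
    {i j : ℤ} (hij : i ≤ j) (hi : W i = ⊤) {μ : K} (hμ : ∀ k ∈ Finset.Ico i j, μ ≠ k) :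
    f.eigenspace μ ≤ W j := by
  intro v hv
  have hmem := aeval_prod_Ico_apply_mem hfW hij (hi ▸ Submodule.mem_top : v ∈ W i)
  rw [aeval_apply_of_mem_apply_eq_smul (mem_eigenspace_iff.mp hv)] at hmem
  refine (Submodule.smul_mem_iff _ ?_).mp hmem
  simpa [eval_prod, Finset.prod_ne_zero_iff, sub_eq_zero] using hμ

variable [CharZero K]

theorem le_iSup_eigenspace_Ico (hfW : f.IsScalarOnGraded W)
    {i j : ℤ} (hij : i ≤ j) (hj : W j = ⊥) :
    W i ≤ ⨆ k ∈ Finset.Ico i j, f.eigenspace (k : K) := by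
  intro v hv
  rw [← ker_aeval_prod_X_sub_C f _ Int.cast_injective.injOn, LinearMap.mem_ker,
    ← Submodule.mem_bot K, ← hj]
  exact aeval_prod_Ico_apply_mem hfW hij hv

theorem iSup_intCast_eigenspace_eq_top (hfW : f.IsScalarOnGraded W) {a b : ℤ} (hab : a ≤ b)
    (ha : W a = ⊤) (hb : W b = ⊥) :
    ⨆ n : ℤ, f.eigenspace (n : K) = ⊤ :=
  top_le_iff.mp <| ha ▸ (le_iSup_eigenspace_Ico hfW hab hb).trans
    (iSup₂_le fun k _ => le_iSup (fun n : ℤ => f.eigenspace (n : K)) k)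

theorem iSup_natCast_eigenspace_eq (hfW : f.IsScalarOnGraded W) {a b : ℤ} (ha0 : a ≤ 0)
    (hb0 : 0 ≤ b) (ha : W a = ⊤) (hb : W b = ⊥) :
    ⨆ n : ℕ, f.eigenspace (n : K) = W 0 := by
  refine le_antisymm (iSup_le fun n => eigenspace_le_of_notMem_Ico hfW ha0 ha ?_)
    ((le_iSup_eigenspace_Ico hfW hb0 hb).trans (iSup₂_le fun k hk => ?_))
  · intro k hk
    rw [Finset.mem_Ico] at hk
    exact_mod_cast (by omega : (n : ℤ) ≠ k)
  · rw [Finset.mem_Ico] at hk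
    lift k to ℕ using hk.1
    rw [Int.cast_natCast]
    exact le_iSup (fun n : ℕ => f.eigenspace (n : K)) k

end IsScalarOnGraded

/-- For `f = ad e` this is `⊕_{j ≥ k} g(e; j)`: level `0` is the parabolic `p`, level `1` its
nilradical. -/
def eigenFiltration (f : End K V) (k : ℤ) : Submodule K V :=
  ⨆ j : {j : ℤ // k ≤ j}, f.eigenspace (j : K)

theorem eigenspace_le_eigenFiltration (f : End K V) {k j : ℤ} (h : k ≤ j) :
    f.eigenspace (j : K) ≤ f.eigenFiltration k :=
  le_iSup_of_le ⟨j, h⟩ le_rfl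

theorem iSup_natCast_eigenspace_le_eigenFiltration_zero (f : End K V) :
    ⨆ n : ℕ, f.eigenspace (n : K) ≤ f.eigenFiltration 0 :=
  iSup_le fun n => by simpa using f.eigenspace_le_eigenFiltration (Int.natCast_nonneg n)

theorem isScalarOnGraded_eigenFiltration (f : End K V) :
    f.IsScalarOnGraded f.eigenFiltration := by
  intro k v hv
  induction hv using Submodule.iSup_induction' with
  | mem j v hv =>
    rw [mem_eigenspace_iff.mp hv, ← sub_smul]
    rcases j.2.eq_or_lt with h | h
    · simp [h]
    · exact Submodule.smul_mem _ _ (f.eigenspace_le_eigenFiltration h hv)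
  | zero => simp
  | add x y _ _ hx hy =>
    convert add_mem hx hy using 1
    rw [map_add, smul_add]
    abel

variable [FiniteDimensional K V] [CharZero K]

theorem finite_setOf_eigenspace_intCast_ne_bot (f : End K V) :
    {j : ℤ | f.eigenspace (j : K) ≠ ⊥}.Finite :=
  (f.finite_hasEigenvalue.preimage Int.cast_injective.injOn).subset
    fun _ hj => hasEigenvalue_iff.mpr hj

theorem exists_eigenFiltration_eq_bot (f : End K V) :
    ∃ b : ℤ, ∀ k, b ≤ k → f.eigenFiltration k = ⊥ := by
  obtain ⟨b, hb⟩ := f.finite_setOf_eigenspace_intCast_ne_bot.bddAbove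
  refine ⟨b + 1, fun k hk => eq_bot_iff.mpr (iSup_le fun j => ?_)⟩
  by_contra h
  have := hb (show (j : ℤ) ∈ {j : ℤ | f.eigenspace (j : K) ≠ ⊥} from fun h' => h h'.le)
  have := j.2
  omega

theorem exists_eigenFiltration_eq_top {f : End K V} (hf : ⨆ n : ℤ, f.eigenspace (n : K) = ⊤) :
    ∃ a : ℤ, ∀ k, k ≤ a → f.eigenFiltration k = ⊤ := by
  obtain ⟨a, ha⟩ := f.finite_setOf_eigenspace_intCast_ne_bot.bddBelow
  refine ⟨a, fun k hk => top_le_iff.mp (hf ▸ iSup_le fun n => ?_)⟩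
  by_cases hn : f.eigenspace (n : K) = ⊥
  · simp [hn]
  · exact f.eigenspace_le_eigenFiltration (hk.trans (ha hn))

end Module.End

namespace LieAlgebra

open Module End

variable {K L : Type*} [Field K] [LieRing L] [LieAlgebra K L]

theorem lie_mem_eigenspace_ad_add (e : L) {μ ν : K} {x y : L}
    (hx : x ∈ (ad K L e).eigenspace μ) (hy : y ∈ (ad K L e).eigenspace ν) :
    ⁅x, y⁆ ∈ (ad K L e).eigenspace (μ + ν) := by
  rw [mem_eigenspace_iff, ad_apply] at hx hy ⊢
  rw [leibniz_lie, hx, hy, smul_lie, lie_smul, add_smul]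

theorem lie_mem_eigenFiltration_ad_add {e x y : L} {p q : ℤ}
    (hx : x ∈ (ad K L e).eigenFiltration p) (hy : y ∈ (ad K L e).eigenFiltration q) :
    ⁅x, y⁆ ∈ (ad K L e).eigenFiltration (p + q) := by
  induction hx using Submodule.iSup_induction' with
  | mem i x hx =>
    induction hy using Submodule.iSup_induction' with
    | mem j y hy =>
      have hxy := lie_mem_eigenspace_ad_add e hx hy
      rw [← Int.cast_add] at hxy
      exact (ad K L e).eigenspace_le_eigenFiltration (add_le_add i.2 j.2) hxy
    | zero => simp
    | add y z _ _ hy hz => rw [lie_add]; exact add_mem hy hz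
  | zero => simp
  | add x z _ _ hx hz => rw [add_lie]; exact add_mem hx hz

theorem isScalarOnGraded_ad_sub_eigenFiltration {e d : L}
    (hd : d ∈ (ad K L e).eigenFiltration 1) :
    (ad K L (e - d)).IsScalarOnGraded (ad K L e).eigenFiltration := by
  intro k v hv
  rw [map_sub, LinearMap.sub_apply, sub_right_comm]
  refine sub_mem ((ad K L e).isScalarOnGraded_eigenFiltration k v hv) ?_
  rw [add_comm]
  exact lie_mem_eigenFiltration_ad_add hd hv

theorem map_ker_ad_of_apply_eq_self {θ : L →ₗ[K] L} (hθ : Function.Bijective θ)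
    (hbr : ∀ x y : L, θ ⁅x, y⁆ = ⁅θ x, θ y⁆) {x : L} (hx : θ x = x) :
    (LinearMap.ker (ad K L x)).map θ = LinearMap.ker (ad K L x) := by
  ext v
  obtain ⟨w, rfl⟩ := hθ.2 v
  have hθw : ⁅x, θ w⁆ = θ ⁅x, w⁆ := by rw [hbr, hx]
  simp only [Submodule.mem_map, LinearMap.mem_ker, ad_apply, hθ.1.eq_iff, exists_eq_right, hθw,
    map_eq_zero_iff θ hθ.1]

variable [FiniteDimensional K L]

theorem apply_eq_self_of_lie_eq_zero_of_sub_mem_range {θ : L →ₗ[K] L}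
    (hbr : ∀ x y : L, θ ⁅x, y⁆ = ⁅θ x, θ y⁆) {s : L} {ζ : K} (hζ : ζ ≠ 0) (hs : θ s = ζ • s)
    (hss : (ad K L s).IsSemisimple) {x y : L} (hx : θ x = x) (hy : ⁅s, y⁆ = 0)
    (hxy : x - y ∈ LinearMap.range (ad K L s)) : θ y = y := by
  have hθad (z : L) : θ ⁅s, z⁆ = ζ • ⁅s, θ z⁆ := by rw [hbr, hs, smul_lie]
  have hker : θ y - y ∈ LinearMap.ker (ad K L s) := by
    have : ζ • ⁅s, θ y⁆ = 0 := by rw [← hθad, hy, map_zero]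
    rw [LinearMap.mem_ker, ad_apply, lie_sub, hy, sub_zero]
    exact (smul_eq_zero.mp this).resolve_left hζ
  have hrange : θ y - y ∈ LinearMap.range (ad K L s) := by
    obtain ⟨z, hz⟩ := hxy
    refine ⟨z - ζ • θ z, ?_⟩
    rw [ad_apply] at hz
    rw [ad_apply, lie_sub, lie_smul, ← hθad, hz, map_sub, hx]
    abel
  exact sub_eq_zero.mp (Submodule.disjoint_def.mp hss.disjoint_ker_range _ hker hrange)

variable [CharZero K] {e d : L}

theorem iSup_intCast_eigenspace_ad_sub_eq_top
    (hdiag : ⨆ n : ℤ, (ad K L e).eigenspace (n : K) = ⊤)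
    (hd : d ∈ (ad K L e).eigenFiltration 1) :
    ⨆ n : ℤ, (ad K L (e - d)).eigenspace (n : K) = ⊤ := by
  obtain ⟨a, ha⟩ := exists_eigenFiltration_eq_top hdiag
  obtain ⟨b, hb⟩ := (ad K L e).exists_eigenFiltration_eq_bot
  exact iSup_intCast_eigenspace_eq_top (isScalarOnGraded_ad_sub_eigenFiltration hd)
    (min_le_right a b) (ha _ (min_le_left a b)) (hb b le_rfl)

theorem iSup_natCast_eigenspace_ad_sub
    (hdiag : ⨆ n : ℤ, (ad K L e).eigenspace (n : K) = ⊤)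
    (hd : d ∈ (ad K L e).eigenFiltration 1) :
    ⨆ n : ℕ, (ad K L (e - d)).eigenspace (n : K) = ⨆ n : ℕ, (ad K L e).eigenspace (n : K) := by
  obtain ⟨a, ha⟩ := exists_eigenFiltration_eq_top hdiag
  obtain ⟨b, hb⟩ := (ad K L e).exists_eigenFiltration_eq_bot
  have ha0 := ha _ (min_le_left a 0)
  have hb0 := hb _ (le_max_left b 0)
  rw [iSup_natCast_eigenspace_eq (isScalarOnGraded_ad_sub_eigenFiltration hd)
      (min_le_right a 0) (le_max_right b 0) ha0 hb0,
    iSup_natCast_eigenspace_eq (ad K L e).isScalarOnGraded_eigenFiltration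
      (min_le_right a 0) (le_max_right b 0) ha0 hb0]

end LieAlgebra

open Module.End LieAlgebra

theorem stmt8_general {g : Type*} [LieRing g] [LieAlgebra ℂ g] [FiniteDimensional ℂ g]
    (m : ℕ) (hm : 0 < m) (θ : g →ₗ[ℂ] g)
    (hbr : ∀ x y : g, θ ⁅x, y⁆ = ⁅θ x, θ y⁆)
    (hθ : θ ^ m = 1) (ζ : ℂ) (hζ : IsPrimitiveRoot ζ m)
    (e : g) (he0 : e ∈ Module.End.eigenspace θ 1)
    (hdiag : (⨆ n : ℤ, Module.End.eigenspace (LieAlgebra.ad ℂ g e) (n : ℂ)) = ⊤)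
    (s : g) (hs1 : s ∈ Module.End.eigenspace θ ζ)
    (hsp : s ∈ ⨆ n : ℕ, Module.End.eigenspace (LieAlgebra.ad ℂ g e) (n : ℂ))
    (hss : (LieAlgebra.ad ℂ g s).IsSemisimple) :
    ∃ e' : g,
      (⨆ n : ℤ, Module.End.eigenspace (LieAlgebra.ad ℂ g e') (n : ℂ)) = ⊤ ∧
      (⨆ n : ℕ, Module.End.eigenspace (LieAlgebra.ad ℂ g e') (n : ℂ)) =
        (⨆ n : ℕ, Module.End.eigenspace (LieAlgebra.ad ℂ g e) (n : ℂ)) ∧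
      Submodule.map θ (LinearMap.ker (LieAlgebra.ad ℂ g e')) =
        LinearMap.ker (LieAlgebra.ad ℂ g e') ∧
      ⁅e', s⁆ = 0 := by
  set W := (ad ℂ g e).eigenFiltration
  have hsW : s ∈ W 0 := (ad ℂ g e).iSup_natCast_eigenspace_le_eigenFiltration_zero hsp
  have hse : ad ℂ g s e ∈ W 1 := by
    have := neg_mem ((ad ℂ g e).isScalarOnGraded_eigenFiltration 0 s hsW)
    rwa [Int.cast_zero, zero_smul, sub_zero, ad_apply, lie_skew, zero_add] at this
  have hW1 : W 1 ≤ (W 1).comap (ad ℂ g s) := fun x hx => by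
    simpa using lie_mem_eigenFiltration_ad_add hsW hx
  obtain ⟨d, hd, hd_range, hsd⟩ := hss.exists_mem_range_apply_sub_eq_zero hW1 hse
  rw [ad_apply] at hsd
  have hθd : θ (e - d) = e - d :=
    apply_eq_self_of_lie_eq_zero_of_sub_mem_range hbr (hζ.ne_zero hm.ne')
      (mem_eigenspace_iff.mp hs1) hss (by simpa using mem_eigenspace_iff.mp he0) hsd
      (by rwa [sub_sub_cancel])
  have hθbij : Function.Bijective θ := (isUnit_iff θ).mp (IsUnit.of_pow_eq_one hθ hm.ne')
  exact ⟨e - d, iSup_intCast_eigenspace_ad_sub_eq_top hdiag hd,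
    iSup_natCast_eigenspace_ad_sub hdiag hd, map_ker_ad_of_apply_eq_self hθbij hbr hθd,
    by rw [← lie_skew, hsd, neg_zero]⟩

/-- Let `g` be a reductive complex Lie algebra with a finite-order automorphism `θ`
(`θ ^ m = 1`, `ζ` a primitive `m`-th root of unity) inducing the grading by eigenspaces
`g_k = {x | θ x = ζ^k x}`.  A `θ`-stable parabolic subalgebra is encoded by a grading element
`e ∈ g_0` whose adjoint action is diagonalisable with integer eigenvalues:
`p = ⊕_{n ≥ 0} g(e; n)` with Levi factors the zero-eigenspaces of such elements.
If `s ∈ p ∩ g_1` is semisimple (i.e. `ad s` is a semisimple endomorphism), then there is a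
`θ`-stable Levi factor of `p` containing `s`: an element `e'` defining the same parabolic
`p`, whose zero weight space `l = ker (ad e')` is `θ`-stable and satisfies `⁅e', s⁆ = 0`,
i.e. `s ∈ l ∩ g_1`. -/
theorem stmt8 {g : Type*} [LieRing g] [LieAlgebra ℂ g] [FiniteDimensional ℂ g]
    (hred : LieAlgebra.radical ℂ g ≤ LieAlgebra.center ℂ g)
    (m : ℕ) (hm : 0 < m) (θ : g →ₗ[ℂ] g)
    (hbr : ∀ x y : g, θ ⁅x, y⁆ = ⁅θ x, θ y⁆)
    (hθ : θ ^ m = 1) (ζ : ℂ) (hζ : IsPrimitiveRoot ζ m)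
    (e : g) (he0 : e ∈ Module.End.eigenspace θ 1)
    (hdiag : (⨆ n : ℤ, Module.End.eigenspace (LieAlgebra.ad ℂ g e) (n : ℂ)) = ⊤)
    (hpθ : Submodule.map θ (⨆ n : ℕ, Module.End.eigenspace (LieAlgebra.ad ℂ g e) (n : ℂ)) =
      ⨆ n : ℕ, Module.End.eigenspace (LieAlgebra.ad ℂ g e) (n : ℂ))
    (s : g) (hs1 : s ∈ Module.End.eigenspace θ ζ)
    (hsp : s ∈ ⨆ n : ℕ, Module.End.eigenspace (LieAlgebra.ad ℂ g e) (n : ℂ))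
    (hss : (LieAlgebra.ad ℂ g s).IsSemisimple) :
    ∃ e' : g,
      (⨆ n : ℤ, Module.End.eigenspace (LieAlgebra.ad ℂ g e') (n : ℂ)) = ⊤ ∧
      (⨆ n : ℕ, Module.End.eigenspace (LieAlgebra.ad ℂ g e') (n : ℂ)) =
        (⨆ n : ℕ, Module.End.eigenspace (LieAlgebra.ad ℂ g e) (n : ℂ)) ∧
      Submodule.map θ (LinearMap.ker (LieAlgebra.ad ℂ g e')) =
        LinearMap.ker (LieAlgebra.ad ℂ g e') ∧
      ⁅e', s⁆ = 0 :=
  stmt8_general m hm θ hbr hθ ζ hζ e he0 hdiag s hs1 hsp hss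
end
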